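/- Assume that the trace of E*_0 E_0 is nonzero and let ν denote its multiplicative inverse, so tr(E*_0 E_0) = ν^{−1}. Then for all 0≤i,j≤d, (ν / (φ_1 φ_2 ⋯ φ_j)) · τ_i(A) E*_0 E_0 τ*_j(A*) = Δ_{i,j}, where Δ_{i,j} denotes the (d+1)×(d+1) matrix unit over K whose (i,j)-entry is 1 and whose other entries are 0. (Since A is lower bidiagonal and A* is upper bidiagonal as specified, the standard basis of K^{d+1} is a Φ-split basis, and these Δ_{i,j} are the matrix units associated with the split basis.) -/

import Mathlib

open Polynomial Matrix Finset

noncomputable section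

/-- The lower bidiagonal matrix with diagonal entries `θ 0, …, θ d` and
subdiagonal entries `1`. -/
def matA {K : Type*} [Field K] (d : ℕ) (θ : ℕ → K) :
    Matrix (Fin (d + 1)) (Fin (d + 1)) K :=
  Matrix.of fun i j =>
    if (i : ℕ) = (j : ℕ) then θ (i : ℕ)
    else if (i : ℕ) = (j : ℕ) + 1 then 1 else 0

/-- The upper bidiagonal matrix with diagonal entries `θs 0, …, θs d` and
superdiagonal entries `φ 1, …, φ d` (the `(i-1,i)`-entry is `φ i`). -/
def matAs {K : Type*} [Field K] (d : ℕ) (θs φ : ℕ → K) :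
    Matrix (Fin (d + 1)) (Fin (d + 1)) K :=
  Matrix.of fun i j =>
    if (i : ℕ) = (j : ℕ) then θs (i : ℕ)
    else if (j : ℕ) = (i : ℕ) + 1 then φ (j : ℕ) else 0

/-- The primitive idempotent `E_i = ∏_{j ≠ i} (M - θ_j I)/(θ_i - θ_j)` of a matrix `M`
with eigenvalues `θ 0, …, θ d`. -/
def primIdem {K : Type*} [Field K] (d : ℕ) (θ : ℕ → K)
    (M : Matrix (Fin (d + 1)) (Fin (d + 1)) K) (i : ℕ) :
    Matrix (Fin (d + 1)) (Fin (d + 1)) K :=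
  Polynomial.aeval M (∏ j ∈ (Finset.range (d + 1)).erase i,
    (Polynomial.C ((θ i - θ j)⁻¹) * (Polynomial.X - Polynomial.C (θ j))))

/-- `τ_i(λ) = (λ - θ_0)(λ - θ_1)⋯(λ - θ_{i-1})`. -/
def tauPoly {K : Type*} [Field K] (θ : ℕ → K) (i : ℕ) : Polynomial K :=
  ∏ k ∈ Finset.range i, (Polynomial.X - Polynomial.C (θ k))

/-- `η_i(λ) = (λ - θ_d)(λ - θ_{d-1})⋯(λ - θ_{d-i+1})`. -/
def etaPoly {K : Type*} [Field K] (d : ℕ) (θ : ℕ → K) (i : ℕ) : Polynomial K :=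
  ∏ k ∈ Finset.range i, (Polynomial.X - Polynomial.C (θ (d - k)))

/-!
Every row of `E₀ = E₀(A)` is a left `θ₀`-eigenvector of the lower bidiagonal matrix `A`;
reading `r A = θ₀ r` from the last coordinate upwards and using `θⱼ ≠ θ₀` forces `rⱼ = 0`
for `j ≠ 0`, so `E₀` vanishes off column `0`. Since `A*` is the transpose of a lower
bidiagonal matrix, `E*₀` vanishes off row `0` in the same way, hence
`E*₀ E₀ = tr(E*₀ E₀) Δ₀₀`. Finally `(A - θₖ) eₖ = eₖ₊₁` and `(A*ᵀ - θ*ₖ) eₖ = φₖ₊₁ eₖ₊₁` give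
`τᵢ(A) e₀ = eᵢ` and `e₀ᵀ τ*ⱼ(A*) = φ₁⋯φⱼ eⱼᵀ`, so `τᵢ(A) Δ₀₀ τ*ⱼ(A*) = φ₁⋯φⱼ Δᵢⱼ`.
-/

def lowerBidiagonal {K : Type*} [Field K] (d : ℕ) (θ β : ℕ → K) :
    Matrix (Fin (d + 1)) (Fin (d + 1)) K :=
  Matrix.of fun i j =>
    if (i : ℕ) = (j : ℕ) then θ i
    else if (i : ℕ) = (j : ℕ) + 1 then β i else 0

lemma matA_eq_lowerBidiagonal {K : Type*} [Field K] (d : ℕ) (θ : ℕ → K) :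
    matA d θ = lowerBidiagonal d θ 1 := rfl

lemma transpose_matAs {K : Type*} [Field K] (d : ℕ) (θs φ : ℕ → K) :
    (matAs d θs φ)ᵀ = lowerBidiagonal d θs φ := by
  ext i j
  simp only [transpose_apply, matAs, lowerBidiagonal, of_apply, eq_comm (a := (i : ℕ))]
  split_ifs with h <;> simp [h]

lemma Matrix.aeval_transpose {n R : Type*} [Fintype n] [DecidableEq n] [CommRing R]
    (M : Matrix n n R) (p : R[X]) : aeval Mᵀ p = (aeval M p)ᵀ := by
  induction p using Polynomial.induction_on' with
  | add p q hp hq => simp [hp, hq]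
  | monomial k a => simp [Algebra.algebraMap_eq_smul_one, transpose_pow]

lemma primIdem_transpose {K : Type*} [Field K] (d : ℕ) (θ : ℕ → K)
    (M : Matrix (Fin (d + 1)) (Fin (d + 1)) K) (i : ℕ) :
    primIdem d θ Mᵀ i = (primIdem d θ M i)ᵀ :=
  aeval_transpose M _

lemma primIdem_mul_self {K : Type*} [Field K] (d : ℕ) (θ : ℕ → K)
    (M : Matrix (Fin (d + 1)) (Fin (d + 1)) K)
    (hM : M.charpoly = ∏ k ∈ range (d + 1), (X - C (θ k))) {i : ℕ} (hi : i ≤ d) :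
    primIdem d θ M i * M = θ i • primIdem d θ M i := by
  have hfactor : (∏ j ∈ (range (d + 1)).erase i, (C (θ i - θ j)⁻¹ * (X - C (θ j))))
        * (X - C (θ i))
      = (∏ j ∈ (range (d + 1)).erase i, C (θ i - θ j)⁻¹) * M.charpoly := by
    rw [hM, prod_mul_distrib, ← mul_prod_erase (range (d + 1)) (fun k => X - C (θ k))
      (mem_range.mpr (Nat.lt_succ_of_le hi))]
    ring
  have h := congrArg (aeval M) hfactor
  rw [map_mul, map_mul, aeval_self_charpoly, mul_zero] at h
  rw [primIdem, ← sub_eq_zero, ← h]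
  simp [mul_sub, Algebra.algebraMap_eq_smul_one]

lemma mul_eq_trace_smul_single {n R : Type*} [Fintype n] [DecidableEq n] [Semiring R]
    {P Q : Matrix n n R} (a : n) (hP : ∀ i j, i ≠ a → P i j = 0)
    (hQ : ∀ i j, j ≠ a → Q i j = 0) :
    P * Q = trace (P * Q) • single a a 1 := by
  have hPQ : ∀ i j, i ≠ a ∨ j ≠ a → (P * Q) i j = 0 := by
    rintro i j (hi | hj)
    · simp [mul_apply, hP i _ hi]
    · simp [mul_apply, hQ _ j hj]
  have htrace : trace (P * Q) = (P * Q) a a :=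
    Fintype.sum_eq_single a fun k hk => hPQ k k (Or.inl hk)
  ext i j
  by_cases hij : i = a ∧ j = a
  · obtain ⟨rfl, rfl⟩ := hij
    simp [htrace]
  · rw [hPQ i j (not_and_or.mp hij), Matrix.smul_apply, single_apply, if_neg (by tauto),
      smul_zero]

section LowerBidiagonal

variable {K : Type*} [Field K] {d : ℕ} (θ β : ℕ → K)

lemma lowerBidiagonal_charpoly :
    (lowerBidiagonal d θ β).charpoly = ∏ k ∈ range (d + 1), (X - C (θ k)) := by
  have hupper : (lowerBidiagonal d θ β)ᵀ.IsUpperTriangular := by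
    intro i j hij
    have : (j : ℕ) < i := hij
    simp only [transpose_apply, lowerBidiagonal, of_apply]
    rw [if_neg (by omega), if_neg (by omega)]
  rw [← charpoly_transpose, charpoly_of_isUpperTriangular _ hupper,
    ← Fin.prod_univ_eq_prod_range]
  simp [lowerBidiagonal]

lemma vecMul_lowerBidiagonal_last (r : Fin (d + 1) → K) :
    (r ᵥ* lowerBidiagonal d θ β) (Fin.last d) = r (Fin.last d) * θ d := by
  rw [vecMul, dotProduct, Fintype.sum_eq_single (Fin.last d)]
  · simp [lowerBidiagonal]
  · intro x hx
    have : (x : ℕ) < d := Fin.val_lt_last hx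
    simp [lowerBidiagonal, this.ne, (this.trans (Nat.lt_succ_self d)).ne]

lemma vecMul_lowerBidiagonal_castSucc (r : Fin (d + 1) → K) (k : Fin d) :
    (r ᵥ* lowerBidiagonal d θ β) k.castSucc = r k.castSucc * θ k + r k.succ * β (k + 1) := by
  rw [vecMul, dotProduct, Fintype.sum_eq_add k.castSucc k.succ Fin.castSucc_lt_succ.ne]
  · simp [lowerBidiagonal]
  · rintro x ⟨h₁, h₂⟩
    rw [Ne, Fin.ext_iff] at h₁ h₂
    simp only [Fin.val_castSucc, Fin.val_succ] at h₁ h₂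
    simp [lowerBidiagonal, h₁, h₂]

lemma eq_zero_of_vecMul_lowerBidiagonal_eq_smul (hθ : Set.InjOn θ (Set.Iic d))
    {r : Fin (d + 1) → K} (hr : r ᵥ* lowerBidiagonal d θ β = θ 0 • r) :
    ∀ j : Fin (d + 1), j ≠ 0 → r j = 0 := by
  have hθ0 : ∀ j : Fin (d + 1), j ≠ 0 → θ j - θ 0 ≠ 0 := fun j hj h =>
    hj (Fin.ext (hθ (Set.mem_Iic.mpr (Fin.is_le j)) (Set.mem_Iic.mpr (Nat.zero_le d))
      (sub_eq_zero.mp h)))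
  intro j
  induction j using Fin.reverseInduction with
  | last =>
    intro hj
    have h := congrFun hr (Fin.last d)
    rw [vecMul_lowerBidiagonal_last, Pi.smul_apply, smul_eq_mul] at h
    have hne := hθ0 _ hj
    rw [Fin.val_last] at hne
    refine (mul_eq_zero.mp ?_).resolve_left hne
    linear_combination h
  | cast k ih =>
    intro hj
    have h := congrFun hr k.castSucc
    rw [vecMul_lowerBidiagonal_castSucc, ih (Fin.succ_ne_zero k), ← Fin.val_castSucc,
      Pi.smul_apply, smul_eq_mul] at h
    refine (mul_eq_zero.mp ?_).resolve_left (hθ0 _ hj)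
    linear_combination h

lemma primIdem_lowerBidiagonal_apply_of_ne_zero (hθ : Set.InjOn θ (Set.Iic d))
    (i j : Fin (d + 1)) (hj : j ≠ 0) : primIdem d θ (lowerBidiagonal d θ β) 0 i j = 0 := by
  refine eq_zero_of_vecMul_lowerBidiagonal_eq_smul θ β hθ ?_ j hj
  rw [← mul_apply_eq_vecMul,
    primIdem_mul_self d θ _ (lowerBidiagonal_charpoly θ β) (Nat.zero_le d)]
  rfl

lemma lowerBidiagonal_mulVec_single_castSucc (k : Fin d) :
    lowerBidiagonal d θ β *ᵥ Pi.single k.castSucc 1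
      = θ k • Pi.single k.castSucc 1 + β (k + 1) • Pi.single k.succ 1 := by
  ext i
  simp only [mulVec_single_one, col_apply, lowerBidiagonal, of_apply, Pi.add_apply,
    Pi.smul_apply, Pi.single_apply, Fin.ext_iff, Fin.val_castSucc, Fin.val_succ, smul_eq_mul]
  split_ifs <;> simp_all

lemma lowerBidiagonal_sub_smul_mulVec_single (k : Fin d) :
    (lowerBidiagonal d θ β - θ k • 1) *ᵥ Pi.single k.castSucc 1
      = β (k + 1) • Pi.single k.succ 1 := by
  rw [sub_mulVec, smul_mulVec, one_mulVec, lowerBidiagonal_mulVec_single_castSucc,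
    add_sub_cancel_left]

lemma aeval_tauPoly_lowerBidiagonal_mulVec_single_zero (n : Fin (d + 1)) :
    aeval (lowerBidiagonal d θ β) (tauPoly θ n) *ᵥ Pi.single 0 1
      = (∏ k ∈ Icc 1 (n : ℕ), β k) • Pi.single n 1 := by
  induction n using Fin.induction with
  | zero => simp [tauPoly, -mulVec_single]
  | succ k ih =>
    rw [Fin.val_succ, tauPoly, prod_range_succ, mul_comm, map_mul, ← mulVec_mulVec, ← tauPoly,
      ← Fin.val_castSucc, ih, mulVec_smul, map_sub, aeval_X, aeval_C,
      Algebra.algebraMap_eq_smul_one, Fin.val_castSucc, lowerBidiagonal_sub_smul_mulVec_single,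
      smul_smul, prod_Icc_succ_top (Nat.le_add_left 1 k)]

end LowerBidiagonal

theorem matrix_units_split_basis_general {K : Type*} [Field K] (d : ℕ) (θ θs φ : ℕ → K)
    (hθ : ∀ i ≤ d, ∀ j ≤ d, θ i = θ j → i = j)
    (hθs : ∀ i ≤ d, ∀ j ≤ d, θs i = θs j → i = j)
    (hφ : ∀ i, 1 ≤ i → i ≤ d → φ i ≠ 0)
    (htr : Matrix.trace (primIdem d θs (matAs d θs φ) 0 * primIdem d θ (matA d θ) 0) ≠ 0) :
    ∀ i j : Fin (d + 1),
      ((Matrix.trace (primIdem d θs (matAs d θs φ) 0 * primIdem d θ (matA d θ) 0))⁻¹ / ∏ k ∈ Finset.Icc 1 (j : ℕ), φ k) •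
        (Polynomial.aeval (matA d θ) (tauPoly θ ((i : ℕ))) * primIdem d θs (matAs d θs φ) 0 * primIdem d θ (matA d θ) 0 * Polynomial.aeval (matAs d θs φ) (tauPoly θs ((j : ℕ))))
      = Matrix.single i j 1 := by
  intro i j
  set E := primIdem d θ (matA d θ) 0
  set Es := primIdem d θs (matAs d θs φ) 0
  have hE : ∀ k l, l ≠ 0 → E k l = 0 :=
    primIdem_lowerBidiagonal_apply_of_ne_zero θ 1 fun _ ha _ hb => hθ _ ha _ hb
  have hEs : ∀ k l, k ≠ 0 → Es k l = 0 := fun k l hk => by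
    simpa [Es, ← transpose_matAs, primIdem_transpose] using
      primIdem_lowerBidiagonal_apply_of_ne_zero θs φ (fun _ ha _ hb => hθs _ ha _ hb) l k hk
  have hcol : aeval (matA d θ) (tauPoly θ i) *ᵥ Pi.single 0 1 = Pi.single i 1 := by
    rw [matA_eq_lowerBidiagonal, aeval_tauPoly_lowerBidiagonal_mulVec_single_zero]
    simp
  have hrow : Pi.single 0 1 ᵥ* aeval (matAs d θs φ) (tauPoly θs j)
      = (∏ k ∈ Icc 1 (j : ℕ), φ k) • Pi.single j 1 := by
    rw [← mulVec_transpose, ← aeval_transpose, transpose_matAs,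
      aeval_tauPoly_lowerBidiagonal_mulVec_single_zero]
  have hprod : ∏ k ∈ Icc 1 (j : ℕ), φ k ≠ 0 := prod_ne_zero_iff.mpr fun k hk =>
    hφ k (mem_Icc.mp hk).1 ((mem_Icc.mp hk).2.trans (Fin.is_le j))
  set c := (Es * E).trace
  have hEsE : Es * E = c • single 0 0 1 := mul_eq_trace_smul_single 0 hEs hE
  rw [mul_assoc _ Es E, hEsE, single_eq_single_vecMulVec_single, mul_smul_comm, smul_mul,
    mul_vecMulVec, vecMulVec_mul, hcol, hrow, vecMulVec_smul, smul_smul, smul_smul,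
    ← single_eq_single_vecMulVec_single,
    show c⁻¹ / (∏ k ∈ Icc 1 (j : ℕ), φ k) * c * ∏ k ∈ Icc 1 (j : ℕ), φ k = 1 by field_simp,
    one_smul]

theorem matrix_units_split_basis {K : Type*} [Field K] (d : ℕ) (θ θs φ : ℕ → K)
    (hθ : ∀ i ≤ d, ∀ j ≤ d, θ i = θ j → i = j)
    (hθs : ∀ i ≤ d, ∀ j ≤ d, θs i = θs j → i = j)
    (hφ : ∀ i, 1 ≤ i → i ≤ d → φ i ≠ 0)
    (hE0 : ∀ i ≤ d, ∀ j ≤ d, 1 < |(i : ℤ) - (j : ℤ)| →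
      primIdem d θ (matA d θ) i * matAs d θs φ * primIdem d θ (matA d θ) j = 0)
    (hE1 : ∀ i ≤ d, ∀ j ≤ d, |(i : ℤ) - (j : ℤ)| = 1 →
      primIdem d θ (matA d θ) i * matAs d θs φ * primIdem d θ (matA d θ) j ≠ 0)
    (hEs0 : ∀ i ≤ d, ∀ j ≤ d, 1 < |(i : ℤ) - (j : ℤ)| →
      primIdem d θs (matAs d θs φ) i * matA d θ * primIdem d θs (matAs d θs φ) j = 0)
    (hEs1 : ∀ i ≤ d, ∀ j ≤ d, |(i : ℤ) - (j : ℤ)| = 1 →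
      primIdem d θs (matAs d θs φ) i * matA d θ * primIdem d θs (matAs d θs φ) j ≠ 0)
    (htr : Matrix.trace (primIdem d θs (matAs d θs φ) 0 * primIdem d θ (matA d θ) 0) ≠ 0) :
    ∀ i j : Fin (d + 1),
      ((Matrix.trace (primIdem d θs (matAs d θs φ) 0 * primIdem d θ (matA d θ) 0))⁻¹ / ∏ k ∈ Finset.Icc 1 (j : ℕ), φ k) •
        (Polynomial.aeval (matA d θ) (tauPoly θ ((i : ℕ))) * primIdem d θs (matAs d θs φ) 0 * primIdem d θ (matA d θ) 0 * Polynomial.aeval (matAs d θs φ) (tauPoly θs ((j : ℕ))))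
      = Matrix.single i j 1 :=
  matrix_units_split_basis_general d θ θs φ hθ hθs hφ htr
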